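/- Let q be a power of an odd prime with q ≡ 1 (mod 3) and F = 𝔽_q. In the graph R, any two vertices at graph distance 2 from each other have distinct first components. -/

import Mathlib

/-- Vertices: points (left component) and lines (right component), each a triple over `F`. -/
abbrev Vtx (F : Type) := (F × F × F) ⊕ (F × F × F)

/-- Adjacency for the graph `Γ_F(p₁ℓ₁, g(p₁,p₂,ℓ₁))`: a point `(p₁,p₂,p₃)` and a line
`[ℓ₁,ℓ₂,ℓ₃]` are adjacent iff `p₂+ℓ₂ = p₁ℓ₁` and `p₃+ℓ₃ = g(p₁,p₂,ℓ₁)`. -/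
def gammaAdj (F : Type) [Field F] (g : F → F → F → F) : Vtx F → Vtx F → Prop
  | Sum.inl p, Sum.inr l => p.2.1 + l.2.1 = p.1 * l.1 ∧ p.2.2 + l.2.2 = g p.1 p.2.1 l.1
  | Sum.inr l, Sum.inl p => p.2.1 + l.2.1 = p.1 * l.1 ∧ p.2.2 + l.2.2 = g p.1 p.2.1 l.1
  | _, _ => False

/-- The bipartite graph `Γ_F(p₁ℓ₁, g(p₁,p₂,ℓ₁))`. -/
def Gamma (F : Type) [Field F] (g : F → F → F → F) : SimpleGraph (Vtx F) where
  Adj := gammaAdj F g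
  symm := by
    refine ⟨fun v w h => ?_⟩
    match v, w with
    | Sum.inl p, Sum.inr l => exact h
    | Sum.inr l, Sum.inl p => exact h
  loopless := by
    refine ⟨fun v h => ?_⟩
    match v with
    | Sum.inl p => exact h
    | Sum.inr l => exact h

/-- The graph `R = Γ_F(p₁ℓ₁, p₁p₂ℓ₁(p₁+p₂+p₁p₂))`. -/
def RGraph (F : Type) [Field F] : SimpleGraph (Vtx F) :=
  Gamma F (fun p1 p2 l1 => p1 * p2 * l1 * (p1 + p2 + p1 * p2))

/-!
In any graph `Γ_F(p₁ℓ₁, g)`, a neighbour of a vertex is determined by its first component: the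
two adjacency equations solve for the second and then the third component. Two vertices at
distance 2 share a neighbour and are distinct, so their first components differ.
-/

namespace SimpleGraph

variable {V : Type*} {G : SimpleGraph V} {u v : V}

lemma exists_adj_adj_of_dist_eq_two (h : G.dist u v = 2) :
    u ≠ v ∧ ∃ x, G.Adj u x ∧ G.Adj x v := by
  have hedist : G.edist u v = 2 := by
    rw [← (Reachable.of_dist_ne_zero (h ▸ two_ne_zero)).coe_dist_eq_edist, h]
    rfl
  obtain ⟨hne, -, x, hx⟩ := edist_eq_two_iff.mp hedist
  rw [mem_commonNeighbors] at hx
  exact ⟨hne, x, hx.1, hx.2.symm⟩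

end SimpleGraph

namespace Gamma

variable {F : Type} [Field F] {g : F → F → F → F}

lemma point_eq_of_adj_of_adj {p p' l : F × F × F} (h : gammaAdj F g (.inl p) (.inr l))
    (h' : gammaAdj F g (.inl p') (.inr l)) (hfst : p.1 = p'.1) : p = p' := by
  obtain ⟨p1, p2, p3⟩ := p
  obtain ⟨p1', p2', p3'⟩ := p'
  obtain ⟨h₂, h₃⟩ := h
  obtain ⟨h₂', h₃'⟩ := h'
  dsimp only at hfst h₂ h₃ h₂' h₃'
  subst hfst
  obtain rfl : p2 = p2' := by linear_combination h₂ - h₂'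
  obtain rfl : p3 = p3' := by linear_combination h₃ - h₃'
  rfl

lemma line_eq_of_adj_of_adj {l l' p : F × F × F} (h : gammaAdj F g (.inr l) (.inl p))
    (h' : gammaAdj F g (.inr l') (.inl p)) (hfst : l.1 = l'.1) : l = l' := by
  obtain ⟨l1, l2, l3⟩ := l
  obtain ⟨l1', l2', l3'⟩ := l'
  obtain ⟨h₂, h₃⟩ := h
  obtain ⟨h₂', h₃'⟩ := h'
  dsimp only at hfst h₂ h₃ h₂' h₃'
  subst hfst
  obtain rfl : l2 = l2' := by linear_combination h₂ - h₂'
  obtain rfl : l3 = l3' := by linear_combination h₃ - h₃'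
  rfl

lemma eq_of_adj_of_adj_of_fst_eq {u v w : Vtx F} (hv : (Gamma F g).Adj v u)
    (hw : (Gamma F g).Adj w u)
    (hfst : Sum.elim Prod.fst Prod.fst v = Sum.elim (Prod.fst : F × F × F → F) Prod.fst w) :
    v = w := by
  rcases v with p | l <;> rcases u with a | b <;> rcases w with p' | l' <;>
    simp only [Gamma, gammaAdj, Sum.elim_inl, Sum.elim_inr] at hv hw hfst
  · exact congrArg _ (point_eq_of_adj_of_adj hv hw hfst)
  · exact congrArg _ (line_eq_of_adj_of_adj hv hw hfst)

end Gamma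

theorem dist_two_first_components_ne_general (F : Type) [Field F] (v w : Vtx F)
    (hdist : (RGraph F).dist v w = 2) :
    Sum.elim (Prod.fst : F × F × F → F) (Prod.fst : F × F × F → F) v ≠
      Sum.elim (Prod.fst : F × F × F → F) (Prod.fst : F × F × F → F) w := by
  obtain ⟨hne, u, hvu, huw⟩ := SimpleGraph.exists_adj_adj_of_dist_eq_two hdist
  exact fun hfst => hne (Gamma.eq_of_adj_of_adj_of_fst_eq hvu huw.symm hfst)

/-- Let `q` be a power of an odd prime with `q ≡ 1 (mod 3)` and `F = 𝔽_q`. In the graph `R`,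
any two vertices at graph distance 2 have distinct first components. -/
theorem dist_two_first_components_ne (q p e : ℕ) (hp : p.Prime) (hodd : Odd p) (he : 1 ≤ e)
    (hq : q = p ^ e) (hmod : q % 3 = 1) (F : Type) [Field F] [Fintype F]
    (hcard : Fintype.card F = q) (v w : Vtx F) (hdist : (RGraph F).dist v w = 2) :
    Sum.elim (Prod.fst : F × F × F → F) (Prod.fst : F × F × F → F) v ≠
      Sum.elim (Prod.fst : F × F × F → F) (Prod.fst : F × F × F → F) w :=
  dist_two_first_components_ne_general F v w hdist
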